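/- Let α = (α_i)_{i≥0} and β = (β_i)_{i≥0} be two sequences of complex numbers with α_0 = β_0. Then for every positive integer n, the Töplitz matrix satisfies T_{α,β}(n) = L(n)^{-1} · P_{α̌,β̌}(n) · U(n)^{-1}, equivalently P_{α̌,β̌}(n) = L(n) · T_{α,β}(n) · U(n), where L(n) is the n×n lower triangular matrix with entries L_{i,j} = binomial(i,j) for i ≥ j and 0 otherwise, U(n) = L(n)^t, and α̌, β̌ are the binomial transforms of α, β. -/

import Mathlib

/-!
Multiplying an array on the left by `L` and on the right by `Lᵀ` takes binomial transforms in
both indices. A Töplitz array is invariant under the shift `(k, l) ↦ (k + 1, l + 1)`, so the Pascal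
rule `C(i+1, k) = C(i, k) + C(i, k-1)` turns its double binomial transform into an array obeying the
Pascal recurrence. Its borders are `α̌` and `β̌` (the corner needs `α₀ = β₀`), hence it is
`P_{α̌,β̌}`. Since `L` is unitriangular, it is invertible, which gives the first form.
-/

open Matrix

/-- Entry `P_{i,j}` of the generalized Pascal triangle associated to sequences `α`, `β`:
`P_{i,0} = α i`, `P_{0,j} = β j`, and `P_{i,j} = P_{i-1,j} + P_{i,j-1}` for `i, j ≥ 1`. -/
def pascalEntry {R : Type*} [CommRing R] (α β : ℕ → R) : ℕ → ℕ → R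
  | i, 0 => α i
  | 0, j + 1 => β (j + 1)
  | i + 1, j + 1 => pascalEntry α β i (j + 1) + pascalEntry α β (i + 1) j

/-- The generalized Pascal triangle `P_{α,β}(n)`. -/
def genPascal {R : Type*} [CommRing R] (α β : ℕ → R) (n : ℕ) :
    Matrix (Fin n) (Fin n) R :=
  Matrix.of fun i j => pascalEntry α β (i : ℕ) (j : ℕ)

/-- The Töplitz matrix `T_{α,β}(n)`: `t_{i,j} = α_{i-j}` if `i ≥ j`, else `β_{j-i}`. -/
def toeplitz {R : Type*} [CommRing R] (α β : ℕ → R) (n : ℕ) :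
    Matrix (Fin n) (Fin n) R :=
  Matrix.of fun i j => if (j : ℕ) ≤ (i : ℕ) then α ((i : ℕ) - (j : ℕ)) else β ((j : ℕ) - (i : ℕ))

/-- The unipotent lower triangular matrix `L(n)` with `L_{i,j} = C(i,j)` for `i ≥ j`. -/
def lowerL (R : Type*) [CommRing R] (n : ℕ) : Matrix (Fin n) (Fin n) R :=
  Matrix.of fun i j => if (j : ℕ) ≤ (i : ℕ) then ((i : ℕ).choose (j : ℕ) : R) else 0

/-- The binomial inverse transform `α̂_i = ∑_{k=0}^{i} (-1)^{i+k} C(i,k) α_k`. -/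
def hatSeq {R : Type*} [CommRing R] (α : ℕ → R) (i : ℕ) : R :=
  ∑ k ∈ Finset.range (i + 1), (-1 : R) ^ (i + k) * (i.choose k : R) * α k

/-- The binomial transform `α̌_i = ∑_{k=0}^{i} C(i,k) α_k`. -/
def checkSeq {R : Type*} [CommRing R] (α : ℕ → R) (i : ℕ) : R :=
  ∑ k ∈ Finset.range (i + 1), (i.choose k : R) * α k

section Toeplitz

variable {R : Type*}

def toeplitzEntry (α β : ℕ → R) (k l : ℕ) : R :=
  if l ≤ k then α (k - l) else β (l - k)

theorem toeplitzEntry_succ_succ (α β : ℕ → R) (k l : ℕ) :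
    toeplitzEntry α β (k + 1) (l + 1) = toeplitzEntry α β k l := by
  simp [toeplitzEntry]

theorem toeplitz_eq_of_toeplitzEntry [CommRing R] (α β : ℕ → R) (n : ℕ) :
    toeplitz α β n = Matrix.of fun i j : Fin n => toeplitzEntry α β i j :=
  rfl

end Toeplitz

section BinomialTransform

variable {R : Type*} [CommRing R]

theorem checkSeq_add (f g : ℕ → R) (i : ℕ) :
    checkSeq (f + g) i = checkSeq f i + checkSeq g i := by
  simp only [checkSeq, Pi.add_apply, mul_add, Finset.sum_add_distrib]

theorem checkSeq_succ (g : ℕ → R) (i : ℕ) :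
    checkSeq g (i + 1) = checkSeq g i + checkSeq (fun k => g (k + 1)) i := by
  have h_top : ∑ k ∈ Finset.range (i + 1), ((i.choose (k + 1) : ℕ) : R) * g (k + 1)
      = ∑ k ∈ Finset.range i, (i.choose (k + 1) : R) * g (k + 1) := by
    simp [Finset.sum_range_succ]
  simp only [checkSeq, Finset.sum_range_succ' _ (i + 1), Nat.choose_succ_succ, Nat.cast_add,
    add_mul, Finset.sum_add_distrib, h_top]
  rw [Finset.sum_range_succ' (fun k => (i.choose k : R) * g k)]
  simp only [Nat.choose_zero_right]
  ring

theorem checkSeq_eq_sum_range {g : ℕ → R} {i n : ℕ} (hi : i < n) :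
    checkSeq g i = ∑ k ∈ Finset.range n, (i.choose k : R) * g k :=
  Finset.sum_subset (Finset.range_subset_range.mpr hi) fun k _ hk => by
    rw [Nat.choose_eq_zero_of_lt (by simpa using hk), Nat.cast_zero, zero_mul]

def binomialTransform₂ (f : ℕ → ℕ → R) (i j : ℕ) : R :=
  checkSeq (fun k => checkSeq (f k) j) i

theorem binomialTransform₂_succ_succ {f : ℕ → ℕ → R} (hf : ∀ k l, f (k + 1) (l + 1) = f k l)
    (i j : ℕ) : binomialTransform₂ f (i + 1) (j + 1)
      = binomialTransform₂ f i (j + 1) + binomialTransform₂ f (i + 1) j := by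
  have h_inner : (fun k => checkSeq (f (k + 1)) (j + 1))
      = (fun k => checkSeq (f (k + 1)) j) + fun k => checkSeq (f k) j := by
    ext k
    simp only [checkSeq_succ (f (k + 1)), hf, Pi.add_apply]
  simp only [binomialTransform₂, checkSeq_succ _ i, h_inner, checkSeq_add]
  ring

theorem pascalEntry_eq_of_rec {a b : ℕ → R} {F : ℕ → ℕ → R} (h_left : ∀ i, F i 0 = a i)
    (h_top : ∀ j, F 0 (j + 1) = b (j + 1))
    (h_rec : ∀ i j, F (i + 1) (j + 1) = F i (j + 1) + F (i + 1) j) :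
    ∀ i j, pascalEntry a b i j = F i j
  | i, 0 => by rw [pascalEntry, h_left]
  | 0, j + 1 => by rw [pascalEntry, h_top]
  | i + 1, j + 1 => by
    rw [pascalEntry, pascalEntry_eq_of_rec h_left h_top h_rec i (j + 1),
      pascalEntry_eq_of_rec h_left h_top h_rec (i + 1) j, h_rec]

theorem pascalEntry_checkSeq_eq_binomialTransform₂ {α β : ℕ → R} (h : α 0 = β 0) (i j : ℕ) :
    pascalEntry (checkSeq α) (checkSeq β) i j = binomialTransform₂ (toeplitzEntry α β) i j := by
  refine pascalEntry_eq_of_rec (fun i => ?_) (fun j => ?_)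
    (binomialTransform₂_succ_succ (toeplitzEntry_succ_succ α β)) i j
  · simp [binomialTransform₂, checkSeq, toeplitzEntry]
  · simp only [binomialTransform₂, checkSeq, zero_add, Finset.sum_range_one,
      Nat.choose_zero_right, Nat.cast_one, one_mul]
    refine Finset.sum_congr rfl fun l _ => ?_
    rcases l with _ | l <;> simp [toeplitzEntry, h]

end BinomialTransform

section LowerL

variable {R : Type*} [CommRing R] {n : ℕ}

theorem lowerL_apply (i j : Fin n) : lowerL R n i j = ((i : ℕ).choose j : R) := by
  by_cases hji : (j : ℕ) ≤ i
  · rw [lowerL, of_apply, if_pos hji]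
  · rw [lowerL, of_apply, if_neg hji, Nat.choose_eq_zero_of_lt (not_le.mp hji), Nat.cast_zero]

theorem lowerL_mul_of (f : ℕ → ℕ → R) :
    lowerL R n * Matrix.of (fun i j : Fin n => f i j)
      = Matrix.of fun i j : Fin n => checkSeq (fun k => f k j) i := by
  ext i j
  rw [mul_apply, of_apply, checkSeq_eq_sum_range i.2, ← Fin.sum_univ_eq_sum_range]
  simp [lowerL_apply]

theorem of_mul_lowerL_transpose (f : ℕ → ℕ → R) :
    Matrix.of (fun i j : Fin n => f i j) * (lowerL R n)ᵀ
      = Matrix.of fun i j : Fin n => checkSeq (f i) j := by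
  ext i j
  rw [mul_apply, of_apply, checkSeq_eq_sum_range j.2, ← Fin.sum_univ_eq_sum_range]
  simp [lowerL_apply, mul_comm]

theorem det_lowerL : (lowerL R n).det = 1 := by
  rw [det_of_isLowerTriangular _ fun i j hij => by
    rw [lowerL_apply, Nat.choose_eq_zero_of_lt (show (i : ℕ) < j from hij), Nat.cast_zero]]
  simp [lowerL_apply]

end LowerL

theorem toeplitz_factorization_general (α β : ℕ → ℂ) (h : α 0 = β 0) (n : ℕ) :
    toeplitz α β n =
      (lowerL ℂ n)⁻¹ * genPascal (checkSeq α) (checkSeq β) n * ((lowerL ℂ n)ᵀ)⁻¹ ∧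
    genPascal (checkSeq α) (checkSeq β) n = lowerL ℂ n * toeplitz α β n * (lowerL ℂ n)ᵀ := by
  have h_pascal : genPascal (checkSeq α) (checkSeq β) n
      = lowerL ℂ n * toeplitz α β n * (lowerL ℂ n)ᵀ := by
    rw [Matrix.mul_assoc, toeplitz_eq_of_toeplitzEntry, of_mul_lowerL_transpose,
      lowerL_mul_of fun k l => checkSeq (toeplitzEntry α β k) l]
    ext i j
    exact pascalEntry_checkSeq_eq_binomialTransform₂ h i j
  have hL : IsUnit (lowerL ℂ n).det := by simp [det_lowerL]
  have hLt : IsUnit (lowerL ℂ n)ᵀ.det := by simp [det_lowerL]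
  refine ⟨?_, h_pascal⟩
  rw [h_pascal, Matrix.mul_assoc (lowerL ℂ n), nonsing_inv_mul_cancel_left _ _ hL,
    mul_nonsing_inv_cancel_right _ _ hLt]

/-- `T_{α,β}(n) = L(n)⁻¹ · P_{α̌,β̌}(n) · U(n)⁻¹`, equivalently
`P_{α̌,β̌}(n) = L(n) · T_{α,β}(n) · U(n)`, where `U(n) = L(n)ᵀ`. -/
theorem toeplitz_factorization (α β : ℕ → ℂ) (h : α 0 = β 0) (n : ℕ) (hn : 0 < n) :
    toeplitz α β n =
      (lowerL ℂ n)⁻¹ * genPascal (checkSeq α) (checkSeq β) n * ((lowerL ℂ n)ᵀ)⁻¹ ∧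
    genPascal (checkSeq α) (checkSeq β) n = lowerL ℂ n * toeplitz α β n * (lowerL ℂ n)ᵀ :=
  toeplitz_factorization_general α β h n
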